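/- arXiv:1706.00261 — 7 statements merged into one kernel-verified Lean document; each statement's English description precedes it below -/
import Mathlib

section
/- A subset B of a metric space (X,d) is Bourbaki-bounded in X if and only if every real-valued uniformly continuous function on X is bounded on B. -/
/-!
A uniformly continuous `f` maps `iterBall x δ m` into `iterBall (f x) ε m`, and `iterBall x ε m`
lies in the ball of radius `(m + 1) ε`; so uniformly continuous images of Bourbaki-bounded sets
are bounded.

Conversely, if `B` is not Bourbaki-bounded at scale `ε`, pick `b n ∈ B` with
`b n ∉ iterBall (b k) ε n` for `k < n`. An `ε`-chain of total length `< m ε / 2` from `x` stays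
in `iterBall x ε m`, so the infimum over `n` and over `ε`-chains from `b n` to `y` of
`n ε / 2 + length` is at least `n ε / 2` at `b n`. It is `1`-Lipschitz on pairs at distance `< ε`,
hence uniformly continuous, and unbounded on `B`.
-/

/-- m-fold ε-enlargement: `iterBall x ε 0 = ball x ε`, corresponding to B^{m+1}. -/
def iterBall {X : Type*} [PseudoMetricSpace X] (x : X) (ε : ℝ) : ℕ → Set X
  | 0 => Metric.ball x ε
  | (m+1) => ⋃ y ∈ iterBall x ε m, Metric.ball y ε

/-- ε-chainable component of x. -/
def chainBall {X : Type*} [PseudoMetricSpace X] (x : X) (ε : ℝ) : Set X :=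
  ⋃ m, iterBall x ε m

/-- Bourbaki-bounded subset of a metric space. -/
def BourbakiBounded {X : Type*} [PseudoMetricSpace X] (B : Set X) : Prop :=
  ∀ ε > 0, ∃ (m : ℕ) (s : Finset X), B ⊆ ⋃ x ∈ s, iterBall x ε m

/-- α-bounded subset of a metric space. -/
def AlphaBounded {X : Type*} [PseudoMetricSpace X] (B : Set X) : Prop :=
  ∀ ε > 0, ∃ s : Finset X, B ⊆ ⋃ x ∈ s, chainBall x ε

/-- x and y are ε-chained. -/
def Chained {X : Type*} [PseudoMetricSpace X] (ε : ℝ) (x y : X) : Prop :=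
  ∃ (n : ℕ) (u : ℕ → X), u 0 = x ∧ u n = y ∧ ∀ k < n, dist (u k) (u (k+1)) < ε

/-- Bourbaki-Cauchy sequence. -/
def BourbakiCauchy {X : Type*} [PseudoMetricSpace X] (u : ℕ → X) : Prop :=
  ∀ ε > 0, ∃ (m N : ℕ) (x₀ : X), ∀ n ≥ N, u n ∈ iterBall x₀ ε m

/-- Bourbaki-complete metric space. -/
def BourbakiComplete (X : Type*) [PseudoMetricSpace X] : Prop :=
  ∀ u : ℕ → X, BourbakiCauchy u → ∃ x : X, MapClusterPt x Filter.atTop u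

open Metric

section IterBall

variable {X : Type*} [PseudoMetricSpace X] {x y z : X} {ε : ℝ} {m : ℕ}

@[simp]
lemma mem_iterBall_zero : y ∈ iterBall x ε 0 ↔ dist y x < ε := Iff.rfl

lemma mem_iterBall_succ : y ∈ iterBall x ε (m + 1) ↔ ∃ z ∈ iterBall x ε m, dist y z < ε := by
  simp [iterBall]

lemma mem_iterBall_succ_of_mem (hz : z ∈ iterBall x ε m) (hyz : dist y z < ε) :
    y ∈ iterBall x ε (m + 1) :=
  mem_iterBall_succ.2 ⟨z, hz, hyz⟩

lemma iterBall_subset_iterBall_succ (hε : 0 < ε) : iterBall x ε m ⊆ iterBall x ε (m + 1) :=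
  fun _ hy => mem_iterBall_succ_of_mem hy (by simpa using hε)

lemma iterBall_mono (hε : 0 < ε) : Monotone (iterBall x ε) :=
  monotone_nat_of_le_succ fun _ => iterBall_subset_iterBall_succ hε

lemma iterBall_subset_ball : iterBall x ε m ⊆ ball x ((m + 1) * ε) := by
  induction m with
  | zero => intro y hy; simpa using hy
  | succ m ih =>
    intro y hy
    obtain ⟨z, hz, hyz⟩ := mem_iterBall_succ.1 hy
    refine mem_ball.2 ?_
    calc dist y x ≤ dist y z + dist z x := dist_triangle _ _ _
      _ < ε + (m + 1) * ε := add_lt_add hyz (mem_ball.1 (ih hz))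
      _ = (↑(m + 1) + 1) * ε := by push_cast; ring

lemma image_iterBall_subset {Y : Type*} [PseudoMetricSpace Y] {f : X → Y} {δ : ℝ}
    (hf : ∀ a b, dist a b < δ → dist (f a) (f b) < ε) :
    f '' iterBall x δ m ⊆ iterBall (f x) ε m := by
  induction m with
  | zero => rintro _ ⟨y, hy, rfl⟩; exact hf _ _ hy
  | succ m ih =>
    rintro _ ⟨y, hy, rfl⟩
    obtain ⟨z, hz, hyz⟩ := mem_iterBall_succ.1 hy
    exact mem_iterBall_succ_of_mem (ih ⟨z, hz, rfl⟩) (hf _ _ hyz)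

end IterBall

section BourbakiBounded

variable {X Y : Type*} [PseudoMetricSpace X] [PseudoMetricSpace Y] {B : Set X}

lemma BourbakiBounded.image {f : X → Y} (hB : BourbakiBounded B) (hf : UniformContinuous f) :
    BourbakiBounded (f '' B) := by
  classical
  intro ε hε
  obtain ⟨δ, hδ, hfδ⟩ := Metric.uniformContinuous_iff.1 hf ε hε
  obtain ⟨m, s, hs⟩ := hB δ hδ
  refine ⟨m, s.image f, ?_⟩
  rintro _ ⟨y, hy, rfl⟩
  obtain ⟨x, hx, hyx⟩ := Set.mem_iUnion₂.1 (hs hy)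
  exact Set.mem_biUnion (Finset.mem_image_of_mem f hx)
    (image_iterBall_subset (fun _ _ h => hfδ h) ⟨y, hyx, rfl⟩)

lemma BourbakiBounded.isBounded (hB : BourbakiBounded B) : Bornology.IsBounded B := by
  obtain ⟨m, s, hs⟩ := hB 1 one_pos
  refine Bornology.IsBounded.subset ?_ (hs.trans (Set.biUnion_mono subset_rfl
    fun x _ => iterBall_subset_ball (x := x) (m := m)))
  exact (Bornology.isBounded_biUnion s.finite_toSet).2 fun _ _ => isBounded_ball

end BourbakiBounded

inductive ChainOfLength {X : Type*} [PseudoMetricSpace X] (ε : ℝ) (x : X) : X → ℝ → Prop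
  | refl : ChainOfLength ε x x 0
  | snoc {y z : X} {ℓ : ℝ} :
      ChainOfLength ε x y ℓ → dist y z < ε → ChainOfLength ε x z (ℓ + dist y z)

namespace ChainOfLength

variable {X : Type*} [PseudoMetricSpace X] {x y : X} {ε ℓ : ℝ}

lemma nonneg (h : ChainOfLength ε x y ℓ) : 0 ≤ ℓ := by
  induction h with
  | refl => rfl
  | snoc _ _ ih => exact add_nonneg ih dist_nonneg

/-- The greedy estimate: whenever two consecutive steps of the chain add up to less than `ε`
the middle point can be skipped, and otherwise they use up at least `ε` of the length. -/
lemma mem_iterBall_of_dist_lt (h : ChainOfLength ε x y ℓ) {z : X} {m : ℕ}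
    (hyz : dist y z < ε) (hℓ : ℓ + dist y z < m * ε / 2) : z ∈ iterBall x ε m := by
  induction h generalizing z m with
  | refl =>
    exact iterBall_mono (dist_nonneg.trans_lt hyz) (Nat.zero_le m) (by simpa [dist_comm] using hyz)
  | @snoc w y ℓ hw hwy ih =>
    rcases lt_or_ge (dist w y + dist y z) ε with hshort | hlong
    · have hwz : dist w z ≤ dist w y + dist y z := dist_triangle _ _ _
      exact ih (hwz.trans_lt hshort) (by linarith)
    · have hε : 0 < ε := dist_nonneg.trans_lt hwy
      have hℓ₀ := hw.nonneg
      have hm : (2 : ℝ) ≤ m := (lt_of_mul_lt_mul_right (by linarith) hε.le).le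
      obtain ⟨k, rfl⟩ := Nat.exists_eq_add_of_le' (by exact_mod_cast hm : 2 ≤ m)
      have hw' : w ∈ iterBall x ε k := ih (by simpa using hε)
        (by rw [dist_self, add_zero]; push_cast at hℓ; linarith)
      exact mem_iterBall_succ_of_mem (mem_iterBall_succ_of_mem hw' (by rwa [dist_comm]))
        (by rwa [dist_comm])

lemma mem_iterBall (h : ChainOfLength ε x y ℓ) {m : ℕ} (hℓ : ℓ < m * ε / 2) :
    y ∈ iterBall x ε m := by
  have hε : 0 < ε := by
    by_contra! hε
    nlinarith [h.nonneg, (Nat.cast_nonneg m : (0 : ℝ) ≤ m)]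
  exact h.mem_iterBall_of_dist_lt (by simpa using hε) (by simpa using hℓ)

end ChainOfLength

lemma uniformContinuous_of_dist_le_of_dist_lt {α β : Type*} [PseudoMetricSpace α]
    [PseudoMetricSpace β] {f : α → β} {ε : ℝ} (hε : 0 < ε)
    (hf : ∀ x y, dist x y < ε → dist (f x) (f y) ≤ dist x y) : UniformContinuous f :=
  Metric.uniformContinuous_iff.2 fun η hη => ⟨min ε η, lt_min hε hη, fun {x y} hxy =>
    (hf x y (hxy.trans_le (min_le_left _ _))).trans_lt (hxy.trans_le (min_le_right _ _))⟩

section ChainPotential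

variable {X ι : Type*} [PseudoMetricSpace X] {ε : ℝ} {b : ι → X} {c : ι → ℝ}

def weightedChainLengths (ε : ℝ) (b : ι → X) (c : ι → ℝ) (y : X) : Set ℝ :=
  {c i + ℓ | (i : ι) (ℓ : ℝ) (_ : ChainOfLength ε (b i) y ℓ)}

/-- An infimal convolution of the weights `c` with the `ε`-chain length metric; it is `0` at
points not `ε`-chained to any `b i`. -/
noncomputable def chainPotential (ε : ℝ) (b : ι → X) (c : ι → ℝ) (y : X) : ℝ :=
  sInf (weightedChainLengths ε b c y)

lemma chainPotential_le_add_dist (hc : ∀ i, 0 ≤ c i) {y z : X} (hyz : dist y z < ε) :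
    chainPotential ε b c z ≤ chainPotential ε b c y + dist y z := by
  rcases (weightedChainLengths ε b c y).eq_empty_or_nonempty with hy | hy
  · have hz : weightedChainLengths ε b c z = ∅ := by
      refine Set.eq_empty_of_forall_notMem ?_
      rintro _ ⟨i, ℓ, hℓ, rfl⟩
      exact hy.subset ⟨i, _, hℓ.snoc (by rwa [dist_comm]), rfl⟩
    simp [chainPotential, hy, hz]
  · have hbdd : BddBelow (weightedChainLengths ε b c z) :=
      ⟨0, by rintro _ ⟨i, ℓ, hℓ, rfl⟩; exact add_nonneg (hc i) hℓ.nonneg⟩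
    rw [← sub_le_iff_le_add]
    refine le_csInf hy ?_
    rintro _ ⟨i, ℓ, hℓ, rfl⟩
    rw [sub_le_iff_le_add, add_assoc]
    exact csInf_le hbdd ⟨i, _, hℓ.snoc hyz, rfl⟩

lemma uniformContinuous_chainPotential (hε : 0 < ε) (hc : ∀ i, 0 ≤ c i) :
    UniformContinuous (chainPotential ε b c) :=
  uniformContinuous_of_dist_le_of_dist_lt hε fun y z hyz => abs_sub_le_iff.2
    ⟨by linarith [chainPotential_le_add_dist (b := b) hc (dist_comm y z ▸ hyz), dist_comm y z],
     by linarith [chainPotential_le_add_dist (b := b) hc hyz]⟩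

end ChainPotential

section NotBourbakiBounded

variable {X : Type*} [PseudoMetricSpace X] {B : Set X}

lemma exists_seq_notMem_iterBall {ε : ℝ} (hε : 0 < ε)
    (hB : ∀ (m : ℕ) (s : Finset X), ¬ B ⊆ ⋃ x ∈ s, iterBall x ε m) :
    ∃ b : ℕ → X, (∀ n, b n ∈ B) ∧ ∀ k n, k < n → b n ∉ iterBall (b k) ε n := by
  classical
  obtain ⟨p, hpB, hp⟩ := exists_seq_of_forall_finset_exists (fun p : ℕ × X => p.2 ∈ B)
    (fun p q => p.1 < q.1 ∧ q.2 ∉ iterBall p.2 ε q.1) fun s _ => by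
      obtain ⟨y, hyB, hy⟩ := Set.not_subset.1 (hB (s.sup Prod.fst + 1) (s.image Prod.snd))
      refine ⟨(s.sup Prod.fst + 1, y), hyB, fun q hq => ⟨Nat.lt_succ_of_le (Finset.le_sup hq),
        fun hyq => hy (Set.mem_biUnion (Finset.mem_image_of_mem _ hq) hyq)⟩⟩
  have hmono : StrictMono fun n => (p n).1 :=
    strictMono_nat_of_lt_succ fun n => (hp n (n + 1) n.lt_succ_self).1
  exact ⟨fun n => (p n).2, hpB, fun k n hkn hmem =>
    (hp k n hkn).2 (iterBall_mono hε hmono.le_apply hmem)⟩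

lemma le_chainPotential_self {ε : ℝ} {b : ℕ → X} (hε : 0 < ε)
    (hsep : ∀ k n, k < n → b n ∉ iterBall (b k) ε n) (n : ℕ) :
    n * ε / 2 ≤ chainPotential ε b (fun k => k * ε / 2) (b n) := by
  refine le_csInf ⟨_, n, 0, .refl, rfl⟩ ?_
  rintro _ ⟨k, ℓ, hℓ, rfl⟩
  rcases lt_or_ge k n with hkn | hnk
  · have hℓn : n * ε / 2 ≤ ℓ := le_of_not_gt fun h => hsep k n hkn (hℓ.mem_iterBall h)
    have hk : 0 ≤ (k : ℝ) * ε / 2 := by positivity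
    linarith
  · have hnk : (n : ℝ) ≤ k := by exact_mod_cast hnk
    have hkℓ : (n : ℝ) * ε / 2 ≤ k * ε / 2 := by gcongr
    linarith [hℓ.nonneg]

lemma exists_uniformContinuous_not_isBounded_image (hB : ¬ BourbakiBounded B) :
    ∃ f : X → ℝ, UniformContinuous f ∧ ¬ Bornology.IsBounded (f '' B) := by
  simp only [BourbakiBounded, not_forall, not_exists] at hB
  obtain ⟨ε, hε, hcover⟩ := hB
  obtain ⟨b, hbB, hsep⟩ := exists_seq_notMem_iterBall hε hcover
  refine ⟨chainPotential ε b (fun k => k * ε / 2),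
    uniformContinuous_chainPotential hε fun k => by positivity, fun hbdd => ?_⟩
  obtain ⟨C, hC⟩ := hbdd.bddAbove
  obtain ⟨n, hn⟩ := exists_nat_gt (2 * C / ε)
  have hbn := (le_chainPotential_self hε hsep n).trans (hC ⟨b n, hbB n, rfl⟩)
  rw [div_lt_iff₀ hε] at hn
  linarith

end NotBourbakiBounded

theorem bourbakiBounded_iff_uniformContinuous_bounded {X : Type*} [MetricSpace X]
    (B : Set X) :
    BourbakiBounded B ↔ ∀ f : X → ℝ, UniformContinuous f → Bornology.IsBounded (f '' B) := by
  refine ⟨fun hB f hf => (hB.image hf).isBounded, fun h => ?_⟩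
  by_contra hB
  obtain ⟨f, hf, hunb⟩ := exists_uniformContinuous_not_isBounded_image hB
  exact hunb (h f hf)
end

section
/- A subset B of a metric space (X,d) is α-bounded in X if and only if every uniformly continuous function f : X → ℕ (ℕ with the metric inherited from ℝ) has bounded (finite) image on B. -/
section Aux
variable {X : Type*} [PseudoMetricSpace X] {ε : ℝ} {x y z : X}

lemma chained_refl : Chained ε x x :=
  ⟨0, fun _ => x, rfl, rfl, by omega⟩

lemma chained_symm (h : Chained ε x y) : Chained ε y x := by
  obtain ⟨n, u, h0, hn, hd⟩ := h
  refine ⟨n, fun k => u (n - k), by simpa using hn, by simpa using h0, ?_⟩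
  intro k hk
  have e1 : n - k = (n - (k + 1)) + 1 := by omega
  show dist (u (n - k)) (u (n - (k + 1))) < ε
  rw [e1, dist_comm]
  exact hd _ (by omega)

lemma chained_trans (h1 : Chained ε x y) (h2 : Chained ε y z) : Chained ε x z := by
  obtain ⟨n, u, hu0, hun, hud⟩ := h1
  obtain ⟨m, v, hv0, hvm, hvd⟩ := h2
  refine ⟨n + m, fun k => if k ≤ n then u k else v (k - n), by simpa using hu0, ?_, ?_⟩
  · by_cases hm : m = 0
    · subst hm
      simp only [Nat.add_zero, le_refl, if_pos]
      rw [hun, ← hv0, hvm]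
    · simp only [if_neg (by omega : ¬ n + m ≤ n)]
      simpa using hvm
  · intro k hk
    rcases lt_trichotomy k n with h | h | h
    · simp only [if_pos (by omega : k ≤ n), if_pos (by omega : k + 1 ≤ n)]
      exact hud k h
    · subst h
      simp only [le_refl, if_pos, if_neg (by omega : ¬ k + 1 ≤ k)]
      have : k + 1 - k = 1 := by omega
      rw [this, hun, ← hv0]
      exact hvd 0 (by omega)
    · simp only [if_neg (by omega : ¬ k ≤ n), if_neg (by omega : ¬ k + 1 ≤ n)]
      have : k + 1 - n = (k - n) + 1 := by omega
      rw [this]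
      exact hvd (k - n) (by omega)

lemma chained_of_mem_iterBall {m : ℕ} (h : y ∈ iterBall x ε m) : Chained ε x y := by
  induction m generalizing y with
  | zero =>
    refine ⟨1, fun k => if k = 0 then x else y, by simp, by simp, ?_⟩
    intro k hk
    have : k = 0 := by omega
    subst this
    simpa [iterBall, dist_comm] using h
  | succ m ih =>
    simp only [iterBall, Set.mem_iUnion] at h
    obtain ⟨z, hz, hyz⟩ := h
    refine chained_trans (ih hz) ⟨1, fun k => if k = 0 then z else y, by simp, by simp, ?_⟩
    intro k hk
    have : k = 0 := by omega
    subst this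
    simpa [dist_comm] using hyz

lemma chained_of_mem_chainBall (h : y ∈ chainBall x ε) : Chained ε x y := by
  obtain ⟨_, ⟨m, rfl⟩, hm⟩ := h
  exact chained_of_mem_iterBall hm

lemma mem_iterBall_of_chain {m : ℕ} (u : ℕ → X) (hd : ∀ k < m + 1, dist (u k) (u (k+1)) < ε) :
    u (m + 1) ∈ iterBall (u 0) ε m := by
  induction m with
  | zero => simpa [iterBall, dist_comm] using hd 0 (by omega)
  | succ m ih =>
    simp only [iterBall, Set.mem_iUnion]
    exact ⟨u (m + 1), ih (fun k hk => hd k (by omega)), by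
      simpa [dist_comm] using hd (m + 1) (by omega)⟩

lemma mem_chainBall_of_chained (hε : 0 < ε) (h : Chained ε x y) : y ∈ chainBall x ε := by
  obtain ⟨n, u, h0, hn, hd⟩ := h
  rcases n with _ | m
  · refine Set.mem_iUnion.mpr ⟨0, ?_⟩
    rw [← h0, hn]
    simpa [iterBall] using hε
  · refine Set.mem_iUnion.mpr ⟨m, ?_⟩
    rw [← h0, ← hn]
    exact mem_iterBall_of_chain u hd

lemma nat_eq_of_dist_lt_one {a c : ℕ} (h : dist a c < 1) : a = c := by
  by_contra hne
  have h1 : (1 : ℝ) ≤ |(a : ℝ) - (c : ℝ)| := by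
    have : ((a : ℤ) - c) ≠ 0 := by
      simpa [sub_eq_zero] using fun hh => hne (by exact_mod_cast hh)
    have := Int.one_le_abs this
    exact_mod_cast this
  rw [Nat.dist_eq] at h
  linarith

lemma chained_step (h : dist x y < ε) : Chained ε x y := by
  refine ⟨1, fun k => if k = 0 then x else y, by simp, by simp, ?_⟩
  intro k hk
  have : k = 0 := by omega
  subst this
  simpa using h

lemma const_of_chained {f : X → ℕ} {δ : ℝ}
    (hstep : ∀ a b : X, dist a b < δ → f a = f b) (h : Chained δ x y) : f x = f y := by
  obtain ⟨n, u, h0, hn, hd⟩ := h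
  have key : ∀ k, k ≤ n → f x = f (u k) := by
    intro k hk
    induction k with
    | zero => rw [h0]
    | succ k ih =>
      rw [ih (by omega)]
      exact hstep _ _ (hd k (by omega))
  rw [← hn]
  exact key n le_rfl

end Aux

theorem alphaBounded_iff_nat_valued_uc_finite {X : Type*} [MetricSpace X] (B : Set X) :
    AlphaBounded B ↔ ∀ f : X → ℕ, UniformContinuous f → (f '' B).Finite := by
  constructor
  · intro hB f hf
    obtain ⟨δ, hδ, hstep⟩ := Metric.uniformContinuous_iff.mp hf 1 one_pos
    have hconst : ∀ a b : X, Chained δ a b → f a = f b :=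
      fun a b h => const_of_chained (fun a b hab => nat_eq_of_dist_lt_one (hstep hab)) h
    obtain ⟨s, hs⟩ := hB δ hδ
    have hsub : f '' B ⊆ f '' (s : Set X) := by
      rintro _ ⟨p, hp, rfl⟩
      obtain ⟨q, hq, hpq⟩ := Set.mem_iUnion₂.mp (hs hp)
      exact ⟨q, hq, hconst q p (chained_of_mem_chainBall hpq)⟩
    exact (s.finite_toSet.image f).subset hsub
  · intro hf
    by_contra hB
    unfold AlphaBounded at hB
    push_neg at hB
    obtain ⟨ε, hε, hcov⟩ := hB
    have key : ∀ s : Finset X, ∃ p, p ∈ B ∧ ∀ q ∈ s, ¬ Chained ε q p := by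
      intro s
      obtain ⟨p, hpB, hp⟩ := Set.not_subset.mp (hcov s)
      refine ⟨p, hpB, fun q hq hqp => hp ?_⟩
      exact Set.mem_biUnion hq (mem_chainBall_of_chained hε hqp)
    choose pick hpickB hpick using key
    classical
    let S : ℕ → Finset X := fun n => Nat.rec ∅ (fun _ s => insert (pick s) s) n
    let b : ℕ → X := fun n => pick (S n)
    have hmono : ∀ i n, i < n → b i ∈ S n := by
      intro i n h
      induction n with
      | zero => omega
      | succ n ih =>
        show b i ∈ insert (b n) (S n)
        rcases Nat.lt_succ_iff_lt_or_eq.mp h with h | h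
        · exact Finset.mem_insert_of_mem (ih h)
        · subst h; exact Finset.mem_insert_self _ _
    have hne : ∀ i n, i ≠ n → ¬ Chained ε (b i) (b n) := by
      intro i n h hc
      rcases lt_or_gt_of_ne h with h | h
      · exact hpick (S n) (b i) (hmono i n h) hc
      · exact hpick (S i) (b n) (hmono n i h) (chained_symm hc)
    set f : X → ℕ := fun x => sInf {n | Chained ε (b n) x} with hfdef
    have hinv : ∀ x y, Chained ε x y → f x = f y := by
      intro x y hxy
      have hset : {n | Chained ε (b n) x} = {n | Chained ε (b n) y} := by
        ext n
        exact ⟨fun h => chained_trans h hxy, fun h => chained_trans h (chained_symm hxy)⟩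
      simp only [hfdef, hset]
    have hfb : ∀ n, f (b n) = n := by
      intro n
      have hset : {m | Chained ε (b m) (b n)} = {n} := by
        ext m
        simp only [Set.mem_setOf_eq, Set.mem_singleton_iff]
        constructor
        · intro h; by_contra hm; exact hne m n hm h
        · rintro rfl; exact chained_refl
      simp only [hfdef, hset, csInf_singleton]
    have hUC : UniformContinuous f := by
      rw [Metric.uniformContinuous_iff]
      intro δ hδ
      refine ⟨ε, hε, fun {a c} h => ?_⟩
      rw [hinv a c (chained_step h)]
      simpa using hδ
    have hrange : Set.univ ⊆ f '' B := by
      rintro n -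
      exact ⟨b n, hpickB (S n), hfb n⟩
    exact Set.infinite_univ ((hf f hUC).subset hrange)
end

section
/- A metric space (X,d) is Bourbaki-complete (every Bourbaki-Cauchy sequence has a cluster point) if and only if every closed Bourbaki-bounded subset of X is compact. -/
/-!
Bourbaki-boundedness plays the role of total boundedness. A sequence in a Bourbaki-bounded set
has a Bourbaki-Cauchy subsequence: a free ultrafilter on the indices selects, for every `ε`, one
of the finitely many enlarged balls covering the set, and a diagonal extraction follows these
choices. Conversely, the range of a Bourbaki-Cauchy sequence is Bourbaki-bounded, and so is its
closure, because the closure of an `m`-fold enlargement lies in the `(m+1)`-fold one.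
-/

open Metric Set Filter

section

variable {X : Type*} [PseudoMetricSpace X]

lemma iterBall_mono_s10 {x : X} {ε ε' : ℝ} (h : ε ≤ ε') (m : ℕ) :
    iterBall x ε m ⊆ iterBall x ε' m := by
  induction m with
  | zero => exact ball_subset_ball h
  | succ m ih => exact iUnion₂_mono' fun y hy => ⟨y, ih hy, ball_subset_ball h⟩

lemma mem_iterBall_self {x : X} {ε : ℝ} (hε : 0 < ε) (m : ℕ) : x ∈ iterBall x ε m := by
  induction m with
  | zero => exact mem_ball_self hε
  | succ m ih => exact mem_iUnion₂.2 ⟨x, ih, mem_ball_self hε⟩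

lemma closure_iterBall_subset {x : X} {ε : ℝ} (hε : 0 < ε) (m : ℕ) :
    closure (iterBall x ε m) ⊆ iterBall x ε (m + 1) := fun _ hz =>
  let ⟨y, hy, hzy⟩ := Metric.mem_closure_iff.1 hz ε hε
  mem_iUnion₂.2 ⟨y, hy, mem_ball.2 hzy⟩

lemma BourbakiBounded.closure {B : Set X} (hB : BourbakiBounded B) :
    BourbakiBounded (closure B) := by
  intro ε hε
  obtain ⟨m, s, hs⟩ := hB ε hε
  refine ⟨m + 1, s, ?_⟩
  calc _root_.closure B ⊆ ⋃ x ∈ s, _root_.closure (iterBall x ε m) :=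
        (closure_mono hs).trans (Finset.closure_biUnion _ _).subset
    _ ⊆ ⋃ x ∈ s, iterBall x ε (m + 1) := iUnion₂_mono fun x _ => closure_iterBall_subset hε m

lemma BourbakiCauchy.bourbakiBounded_range {u : ℕ → X} (hu : BourbakiCauchy u) :
    BourbakiBounded (range u) := by
  classical
  intro ε hε
  obtain ⟨m, N, x₀, hx₀⟩ := hu ε hε
  refine ⟨m, insert x₀ ((Finset.range N).image u), ?_⟩
  rintro _ ⟨n, rfl⟩
  rcases lt_or_ge n N with hn | hn
  · exact mem_iUnion₂.2 ⟨u n, Finset.mem_insert_of_mem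
      (Finset.mem_image_of_mem u (Finset.mem_range.2 hn)), mem_iterBall_self hε m⟩
  · exact mem_iUnion₂.2 ⟨x₀, Finset.mem_insert_self _ _, hx₀ n hn⟩

lemma BourbakiBounded.exists_iterBall_mem_ultrafilter {B : Set X} (hB : BourbakiBounded B)
    {𝒰 : Ultrafilter X} (hB𝒰 : B ∈ 𝒰) {ε : ℝ} (hε : 0 < ε) :
    ∃ (x : X) (m : ℕ), iterBall x ε m ∈ 𝒰 := by
  obtain ⟨m, s, hs⟩ := hB ε hε
  obtain ⟨x, -, hx⟩ :=
    (Ultrafilter.finite_biUnion_mem_iff s.finite_toSet).1 (Filter.mem_of_superset hB𝒰 hs)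
  exact ⟨x, m, hx⟩

lemma exists_bourbakiCauchy_subseq_of_ultrafilter {u : ℕ → X} {𝒰 : Ultrafilter ℕ}
    (h𝒰 : ↑𝒰 ≤ (atTop : Filter ℕ))
    (hu : ∀ ε > 0, ∃ (x : X) (m : ℕ), ∀ᶠ n in 𝒰, u n ∈ iterBall x ε m) :
    ∃ φ : ℕ → ℕ, StrictMono φ ∧ BourbakiCauchy (u ∘ φ) := by
  choose x m hxm using fun k : ℕ => hu (1 / (k + 1)) Nat.one_div_pos_of_nat
  have hfreq (n : ℕ) :
      ∃ᶠ i in atTop, ∀ k ≤ n, u i ∈ iterBall (x k) (1 / (k + 1)) (m k) :=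
    ((eventually_all_finite (finite_le_nat n)).2 fun k _ => hxm k).frequently.filter_mono h𝒰
  obtain ⟨φ, hφ, hφmem⟩ := extraction_forall_of_frequently hfreq
  refine ⟨φ, hφ, fun ε hε => ?_⟩
  obtain ⟨k, hk⟩ := exists_nat_one_div_lt hε
  exact ⟨m k, k, x k, fun n hn => iterBall_mono_s10 hk.le _ (hφmem n k hn)⟩

lemma BourbakiBounded.exists_bourbakiCauchy_subseq {B : Set X} (hB : BourbakiBounded B)
    {u : ℕ → X} (hu : ∀ n, u n ∈ B) :
    ∃ φ : ℕ → ℕ, StrictMono φ ∧ BourbakiCauchy (u ∘ φ) :=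
  exists_bourbakiCauchy_subseq_of_ultrafilter (Ultrafilter.of_le atTop) fun _ hε =>
    hB.exists_iterBall_mem_ultrafilter (𝒰 := (Ultrafilter.of atTop).map u)
      (univ_mem' hu : u ⁻¹' B ∈ Ultrafilter.of atTop) hε

end

theorem bourbakiComplete_iff_closed_bourbakiBounded_compact (X : Type*) [MetricSpace X] :
    BourbakiComplete X ↔
      ∀ B : Set X, IsClosed B → BourbakiBounded B → IsCompact B := by
  constructor
  · intro hX B hBc hBb
    refine IsSeqCompact.isCompact fun u hu => ?_
    obtain ⟨φ, hφ, hφc⟩ := hBb.exists_bourbakiCauchy_subseq hu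
    obtain ⟨x, hx⟩ := hX _ hφc
    obtain ⟨ψ, hψ, hψx⟩ := hx.tendsto_subseq
    exact ⟨x, hBc.mem_of_mapClusterPt hx (.of_forall fun n => hu (φ n)), φ ∘ ψ, hφ.comp hψ, hψx⟩
  · intro h u hu
    have hK := h _ isClosed_closure hu.bourbakiBounded_range.closure
    obtain ⟨x, -, hx⟩ := hK.exists_mapClusterPt (f := atTop)
      (tendsto_principal.2 (.of_forall fun n => subset_closure (mem_range_self n)))
    exact ⟨x, hx⟩
end

section
/- Let (X,d) be a metric space with completion (X̃,d̃). A subset B ⊆ X is Bourbaki-bounded in X if and only if B is Bourbaki-bounded in X̃. -/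
open UniformSpace Metric in
lemma iterBall_coe_mem {X : Type*} [MetricSpace X] {ε : ℝ} :
    ∀ (m : ℕ) (x b : X), b ∈ iterBall x ε m →
      (b : Completion X) ∈ iterBall (x : Completion X) ε m := by
  intro m
  induction m with
  | zero =>
    intro x b hb
    simpa [iterBall, Completion.dist_eq] using hb
  | succ m ih =>
    intro x b hb
    simp only [iterBall, Set.mem_iUnion] at hb ⊢
    obtain ⟨y, hy, hby⟩ := hb
    exact ⟨y, ih x y hy, by simpa [Completion.dist_eq] using hby⟩

open UniformSpace Metric in
lemma iterBall_back {X : Type*} [MetricSpace X] {ε δ : ℝ} (hδ : 0 < δ) :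
    ∀ (m : ℕ) (xt bt : Completion X), bt ∈ iterBall xt ε m →
      ∀ x b : X, dist (x : Completion X) xt < δ → dist (b : Completion X) bt < δ →
        b ∈ iterBall x (ε + 2 * δ) m := by
  intro m
  induction m with
  | zero =>
    intro xt bt hbt x b hx hb
    simp only [iterBall, mem_ball] at hbt ⊢
    have : dist (b : Completion X) (x : Completion X) ≤
        dist (b : Completion X) bt + dist bt xt + dist xt (x : Completion X) :=
      dist_triangle4 _ _ _ _
    rw [Completion.dist_eq] at this
    rw [dist_comm] at hx
    linarith
  | succ m ih =>
    intro xt bt hbt x b hx hb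
    simp only [iterBall, Set.mem_iUnion, mem_ball] at hbt ⊢
    obtain ⟨yt, hyt, hbyt⟩ := hbt
    obtain ⟨y, hy⟩ := Metric.denseRange_iff.1 Completion.denseRange_coe yt δ hδ
    refine ⟨y, ih xt yt hyt x y hx (by rwa [dist_comm]), ?_⟩
    have : dist (b : Completion X) (y : Completion X) ≤
        dist (b : Completion X) bt + dist bt yt + dist yt (y : Completion X) :=
      dist_triangle4 _ _ _ _
    rw [Completion.dist_eq] at this
    linarith

theorem bourbakiBounded_iff_bourbakiBounded_completion {X : Type*} [MetricSpace X]
    (B : Set X) :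
    BourbakiBounded B ↔
      BourbakiBounded ((↑) '' B : Set (UniformSpace.Completion X)) := by
  constructor
  · intro h ε hε
    obtain ⟨m, s, hs⟩ := h ε hε
    classical
    refine ⟨m, s.image (fun x : X => (x : UniformSpace.Completion X)), ?_⟩
    rintro _ ⟨b, hb, rfl⟩
    have := hs hb
    simp only [Set.mem_iUnion] at this ⊢
    obtain ⟨x, hx, hbx⟩ := this
    exact ⟨(x : UniformSpace.Completion X), Finset.mem_image_of_mem _ hx,
      iterBall_coe_mem m x b hbx⟩
  · intro h ε hε
    have hδ : (0:ℝ) < ε / 4 := by linarith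
    obtain ⟨m, s, hs⟩ := h (ε / 2) (by linarith)
    have hg : ∀ xt : UniformSpace.Completion X, ∃ x : X,
        dist xt (x : UniformSpace.Completion X) < ε / 4 :=
      fun xt => Metric.denseRange_iff.1 UniformSpace.Completion.denseRange_coe xt _ hδ
    choose g hgd using hg
    classical
    refine ⟨m, s.image g, ?_⟩
    intro b hb
    have hbi : (b : UniformSpace.Completion X) ∈ ⋃ x ∈ s, iterBall x (ε/2) m :=
      hs ⟨b, hb, rfl⟩
    simp only [Set.mem_iUnion] at hbi ⊢
    obtain ⟨xt, hxt, hbxt⟩ := hbi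
    have := iterBall_back hδ m xt (b : UniformSpace.Completion X) hbxt (g xt) b
      (by rw [dist_comm]; exact hgd xt) (by simp; linarith)
    have heq : ε / 2 + 2 * (ε / 4) = ε := by ring
    rw [heq] at this
    exact ⟨g xt, Finset.mem_image_of_mem _ hxt, this⟩
end

section
/- Let (X,d) be a metric space. Suppose every Bourbaki-bounded subset of X is totally bounded. Then the completion (X̃,d̃) of X is Bourbaki-complete. -/
open Metric Set Filter UniformSpace Topology

lemma self_mem_iterBall {X : Type*} [PseudoMetricSpace X] {ε : ℝ} (hε : 0 < ε) (x : X) :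
    ∀ m, x ∈ iterBall x ε m
  | 0 => mem_ball_self hε
  | (m+1) => by
      simp only [iterBall, mem_iUnion, exists_prop]
      exact ⟨x, self_mem_iterBall hε x m, mem_ball_self hε⟩

lemma mem_iterBall_iff {X : Type*} [PseudoMetricSpace X] {x : X} {ε : ℝ} (m : ℕ) (y : X) :
    y ∈ iterBall x ε m ↔
      ∃ w : ℕ → X, w 0 = x ∧ w (m+1) = y ∧ ∀ k ≤ m, dist (w k) (w (k+1)) < ε := by
  induction m generalizing y with
  | zero =>
    constructor
    · intro hy
      refine ⟨fun k => if k = 0 then x else y, by simp, by simp, ?_⟩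
      intro k hk
      interval_cases k
      have hy' : dist y x < ε := hy
      simpa [dist_comm] using hy'
    · rintro ⟨w, h0, h1, hd⟩
      have := hd 0 le_rfl
      rw [h0, h1] at this
      show y ∈ Metric.ball x ε
      rw [mem_ball]
      simpa [dist_comm] using this
  | succ m ih =>
    constructor
    · intro hy
      simp only [iterBall, mem_iUnion, exists_prop] at hy
      obtain ⟨z, hz, hyz⟩ := hy
      obtain ⟨w, h0, h1, hd⟩ := (ih z).1 hz
      refine ⟨fun k => if k ≤ m+1 then w k else y, by simp [h0], by simp, ?_⟩
      intro k hk
      rcases lt_or_eq_of_le hk with hk | hk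
      · have hk' : k ≤ m := Nat.lt_succ_iff.mp hk
        simp only [if_pos (by omega : k ≤ m+1), if_pos (by omega : k+1 ≤ m+1)]
        exact hd k hk'
      · subst hk
        simp only [if_pos le_rfl, if_neg (by omega : ¬ (m+1+1 ≤ m+1))]
        rw [h1]
        rw [mem_ball] at hyz
        simpa [dist_comm] using hyz
    · rintro ⟨w, h0, h1, hd⟩
      simp only [iterBall, mem_iUnion, exists_prop]
      refine ⟨w (m+1), (ih _).2 ⟨w, h0, rfl, fun k hk => hd k (by omega)⟩, ?_⟩
      rw [mem_ball, ← h1]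
      simpa [dist_comm] using hd (m+1) le_rfl

lemma exists_nat_one_div_lt' {ε : ℝ} (hε : 0 < ε) : ∃ N : ℕ, ∀ n ≥ N, (1:ℝ)/(n+1) < ε := by
  obtain ⟨N, hN⟩ := exists_nat_gt (1/ε)
  refine ⟨N, fun n hn => ?_⟩
  have h1 : (1:ℝ)/ε < (n:ℝ)+1 := by
    refine lt_of_lt_of_le hN ?_
    have : (N:ℝ) ≤ n := by exact_mod_cast hn
    linarith
  rw [div_lt_iff₀ (by positivity)]
  have := (div_lt_iff₀ hε).mp h1
  nlinarith

theorem completion_bourbakiComplete_of_bourbakiBounded_totallyBounded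
    {X : Type*} [MetricSpace X]
    (h : ∀ B : Set X, BourbakiBounded B → TotallyBounded B) :
    BourbakiComplete (UniformSpace.Completion X) := by
  intro u hu
  have hdense : DenseRange ((↑) : X → Completion X) := Completion.denseRange_coe
  have hsel : ∀ n : ℕ, ∃ x : X, dist (u n) ((x : Completion X)) < 1/(n+1) :=
    fun n => Metric.denseRange_iff.mp hdense (u n) (1/(n+1)) (by positivity)
  choose v hv using hsel
  -- the approximating sequence has Bourbaki-bounded range in X
  have hbb : BourbakiBounded (Set.range v) := by
    classical
    intro ε hε
    obtain ⟨m, N, x₀, hm⟩ := hu (ε/2) (by linarith)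
    obtain ⟨z₀, hz₀⟩ := Metric.denseRange_iff.mp hdense x₀ (ε/8) (by linarith)
    obtain ⟨N', hN'⟩ := exists_nat_one_div_lt' (show (0:ℝ) < ε/8 by linarith)
    refine ⟨m+1, insert z₀ ((Finset.range (max N N')).image v), ?_⟩
    rintro _ ⟨n, rfl⟩
    by_cases hn : n < max N N'
    · exact mem_iUnion₂.mpr ⟨v n,
        Finset.mem_insert_of_mem (Finset.mem_image.mpr ⟨n, Finset.mem_range.mpr hn, rfl⟩),
        self_mem_iterBall hε (v n) (m+1)⟩
    · push_neg at hn
      have hnN : n ≥ N := le_trans (le_max_left _ _) hn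
      have hnN' : n ≥ N' := le_trans (le_max_right _ _) hn
      obtain ⟨w, hw0, hw1, hwd⟩ := (mem_iterBall_iff m (u n)).1 (hm n hnN)
      -- approximate each chain point by a point of X
      have happ : ∀ k : ℕ, ∃ z : X, dist (w k) ((z : Completion X)) < ε/8 :=
        fun k => Metric.denseRange_iff.mp hdense (w k) (ε/8) (by linarith)
      choose g hg using happ
      -- the extended completion chain
      set W : ℕ → Completion X := fun k => if k ≤ m+1 then w k else ((v n : Completion X))
        with hW
      set z : ℕ → X := fun k => if k = 0 then z₀ else if k ≤ m+1 then g k else v n with hz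
      have hkey : ∀ k ≤ m+2, dist (W k) ((z k : Completion X)) < ε/8 := by
        intro k hk
        rcases Nat.eq_zero_or_pos k with rfl | hk0
        · simpa [hW, hz, hw0] using hz₀
        · by_cases hk1 : k ≤ m+1
          · simpa [hW, hz, hk1, Nat.pos_iff_ne_zero.mp hk0] using hg k
          · have hk2 : k = m+2 := by omega
            subst hk2
            have hWe : W (m+2) = ((v n : Completion X)) := by
              simp only [hW]
              rw [if_neg (by omega : ¬ (m+2 ≤ m+1))]
            have hze : z (m+2) = v n := by
              simp only [hz]
              rw [if_neg (by omega : m+2 ≠ 0), if_neg (by omega : ¬ (m+2 ≤ m+1))]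
            rw [hWe, hze, dist_self]
            linarith
      have hWd : ∀ k ≤ m+1, dist (W k) (W (k+1)) < 3*ε/4 := by
        intro k hk
        by_cases hk' : k ≤ m
        · simp only [hW]
          rw [if_pos (by omega : k ≤ m+1), if_pos (by omega : k+1 ≤ m+1)]
          have := hwd k hk'
          linarith
        · have hk2 : k = m+1 := by omega
          subst hk2
          simp only [hW]
          rw [if_pos le_rfl, if_neg (by omega : ¬ (m+1+1 ≤ m+1)), hw1]
          have := lt_trans (hv n) (hN' n hnN')
          linarith
      -- build the chain in X
      have hchain : v n ∈ iterBall z₀ ε (m+1) := by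
        rw [mem_iterBall_iff]
        have hze : z ((m+1)+1) = v n := by
          simp only [hz]
          rw [if_neg (by omega : ¬ (m+2 = 0)), if_neg (by omega : ¬ (m+2 ≤ m+1))]
        refine ⟨z, by simp [hz], hze, ?_⟩
        intro k hk
        have hdist : dist (z k) (z (k+1)) = dist ((z k : Completion X)) ((z (k+1) : Completion X)) :=
          (Completion.dist_eq _ _).symm
        rw [hdist]
        calc dist ((z k : Completion X)) ((z (k+1) : Completion X))
            ≤ dist ((z k : Completion X)) (W k) + dist (W k) (W (k+1))
              + dist (W (k+1)) ((z (k+1) : Completion X)) := dist_triangle4 _ _ _ _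
          _ < ε/8 + 3*ε/4 + ε/8 := by
              have h1 := hkey k (by omega)
              have h2 := hkey (k+1) (by omega)
              have h3 := hWd k hk
              rw [dist_comm] at h1
              exact add_lt_add (add_lt_add h1 h3) h2
          _ = ε := by ring
      exact mem_iUnion₂.mpr ⟨z₀, Finset.mem_insert_self _ _, hchain⟩
  -- total boundedness and compactness in the completion
  have htb : TotallyBounded (Set.range v) := h _ hbb
  have htb2 : TotallyBounded (((↑) : X → Completion X) '' Set.range v) :=
    htb.image (Completion.uniformContinuous_coe X)
  have hK : IsCompact (closure (((↑) : X → Completion X) '' Set.range v)) :=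
    TotallyBounded.isCompact_of_isClosed htb2.closure isClosed_closure
  obtain ⟨x, -, φ, hφ, hlim⟩ := hK.tendsto_subseq
    (x := fun n => ((v n : Completion X))) (fun n => subset_closure ⟨v n, ⟨n, rfl⟩, rfl⟩)
  refine ⟨x, ?_⟩
  have htend : Tendsto (u ∘ φ) atTop (𝓝 x) := by
    rw [Metric.tendsto_atTop]
    intro ε hε
    rw [Metric.tendsto_atTop] at hlim
    obtain ⟨N1, hN1⟩ := hlim (ε/2) (by linarith)
    obtain ⟨N2, hN2⟩ := exists_nat_one_div_lt' (show (0:ℝ) < ε/2 by linarith)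
    refine ⟨max N1 N2, fun n hn => ?_⟩
    have h1 := hN1 n (le_trans (le_max_left _ _) hn)
    have h2 : dist (u (φ n)) ((v (φ n) : Completion X)) < ε/2 := by
      refine lt_trans (hv (φ n)) (hN2 (φ n) ?_)
      exact le_trans (le_trans (le_max_right _ _) hn) hφ.le_apply
    calc dist ((u ∘ φ) n) x ≤ dist (u (φ n)) ((v (φ n) : Completion X))
          + dist ((v (φ n) : Completion X)) x := dist_triangle _ _ _
      _ < ε/2 + ε/2 := add_lt_add h2 h1
      _ = ε := by ring
  exact MapClusterPt.of_comp hφ.tendsto_atTop htend.mapClusterPt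
end

section
/- If f : (X,d) → (Y,ρ) is a Lipschitz-in-the-small map between metric spaces (there exist δ > 0 and K > 0 with ρ(f(x),f(y)) ≤ K·d(x,y) whenever d(x,y) < δ) and B ⊆ X is Bourbaki-bounded in X, then f(B) is a bounded subset of Y. -/
lemma iterBall_image_dist {X Y : Type*} [MetricSpace X] [MetricSpace Y]
    {f : X → Y} {δ K : ℝ} (hK : 0 < K)
    (hf : ∀ x y : X, dist x y < δ → dist (f x) (f y) ≤ K * dist x y)
    {ε : ℝ} (hεδ : ε ≤ δ) (x : X) :
    ∀ m, ∀ z ∈ iterBall x ε m, dist (f z) (f x) ≤ K * ε * (m + 1) := by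
  intro m
  induction m with
  | zero =>
    intro z hz
    simp only [iterBall, Metric.mem_ball] at hz
    have := hf z x (lt_of_lt_of_le hz hεδ)
    calc dist (f z) (f x) ≤ K * dist z x := this
      _ ≤ K * ε * (↑(0:ℕ) + 1) := by push_cast; nlinarith
  | succ m ih =>
    intro z hz
    simp only [iterBall, Set.mem_iUnion, Metric.mem_ball] at hz
    obtain ⟨y, hy, hzy⟩ := hz
    have h1 : dist (f z) (f y) ≤ K * ε := by
      have := hf z y (lt_of_lt_of_le hzy hεδ)
      nlinarith
    have h2 := ih y hy
    calc dist (f z) (f x) ≤ dist (f z) (f y) + dist (f y) (f x) := dist_triangle _ _ _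
      _ ≤ K * ε + K * ε * (m + 1) := add_le_add h1 h2
      _ ≤ K * ε * (↑(m + 1) + 1) := by push_cast; nlinarith
  
theorem lipschitz_in_the_small_image_bounded {X Y : Type*} [MetricSpace X] [MetricSpace Y]
    {f : X → Y} (hf : ∃ δ > (0:ℝ), ∃ K > (0:ℝ), ∀ x y : X, dist x y < δ →
      dist (f x) (f y) ≤ K * dist x y)
    {B : Set X} (hB : BourbakiBounded B) :
    Bornology.IsBounded (f '' B) := by
  obtain ⟨δ, hδ, K, hK, hlip⟩ := hf
  obtain ⟨m, s, hs⟩ := hB δ hδ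
  have key := iterBall_image_dist hK hlip (le_refl δ)
  have : f '' B ⊆ ⋃ x ∈ s, Metric.closedBall (f x) (K * δ * (m + 1)) := by
    rintro _ ⟨z, hz, rfl⟩
    obtain ⟨x, hx, hzx⟩ := Set.mem_iUnion₂.1 (hs hz)
    exact Set.mem_iUnion₂.2 ⟨x, hx, Metric.mem_closedBall.2 (key x m z hzx)⟩
  have hb : Bornology.IsBounded (⋃ x ∈ s, Metric.closedBall (f x) (K * δ * (m + 1))) :=
    (Bornology.isBounded_biUnion_finset s).2 (fun x _ => Metric.isBounded_closedBall)
  exact hb.subset this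
end

section
/- Let (X,d) be a metric space and B ⊆ X a Bourbaki-bounded subset in X. If g : X → ℝ satisfies g ≥ 1 and is Lipschitz in the small with constants K and 1/n (i.e., |g(x)−g(y)| ≤ K·d(x,y) whenever d(x,y) < 1/n), then g is bounded on each set of the form ⋃_{i∈F} B^M(x_i, 1/n) where F is finite and M ∈ ℕ; in particular g is bounded on B. -/
theorem ls_ge_one_bounded_on_enlargements_and_bourbakiBounded {X : Type*} [MetricSpace X]
    {B : Set X} (hB : BourbakiBounded B) {g : X → ℝ} (hg1 : ∀ x, 1 ≤ g x)
    {K : ℝ} (hK : 0 < K) {n : ℕ} (hn : 0 < n)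
    (hg : ∀ x y : X, dist x y < 1 / n → |g x - g y| ≤ K * dist x y) :
    (∀ (F : Finset X) (M : ℕ), ∃ C : ℝ, ∀ x ∈ ⋃ i ∈ F, iterBall i (1 / n) M, |g x| ≤ C) ∧
    (∃ C : ℝ, ∀ x ∈ B, |g x| ≤ C) := by
  have hε : (0:ℝ) < 1 / n := by positivity
  -- key: bound on a single iterated ball
  have key : ∀ (M : ℕ) (x y : X), y ∈ iterBall x (1 / n) M →
      g y ≤ g x + K * (1 / n) * (M + 1) := by
    intro M
    induction M with
    | zero =>
      intro x y hy
      simp only [iterBall, Metric.ball, Set.mem_setOf_eq] at hy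
      have h := hg y x hy
      have := abs_le.mp h |>.2
      nlinarith [dist_nonneg (x := y) (y := x), hy]
    | succ M ih =>
      intro x y hy
      simp only [iterBall, Set.mem_iUnion] at hy
      obtain ⟨z, hz, hyz⟩ := hy
      have h1 := ih x z hz
      simp only [Metric.mem_ball] at hyz
      have h := hg y z hyz
      have h2 := abs_le.mp h |>.2
      have : g y ≤ g z + K * (1 / n) := by nlinarith [dist_nonneg (x := y) (y := z)]
      push_cast
      nlinarith
  have main : ∀ (F : Finset X) (M : ℕ), ∃ C : ℝ,
      ∀ x ∈ ⋃ i ∈ F, iterBall i (1 / n) M, |g x| ≤ C := by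
    intro F M
    refine ⟨(∑ i ∈ F, g i) + K * (1 / n) * (M + 1), ?_⟩
    intro x hx
    simp only [Set.mem_iUnion] at hx
    obtain ⟨i, hi, hxi⟩ := hx
    have h1 := key M i x hxi
    have h2 : g i ≤ ∑ j ∈ F, g j :=
      Finset.single_le_sum (fun j _ => le_trans zero_le_one (hg1 j)) hi
    have h3 : (0:ℝ) ≤ g x := le_trans zero_le_one (hg1 x)
    rw [abs_of_nonneg h3]
    linarith
  refine ⟨main, ?_⟩
  obtain ⟨m, s, hs⟩ := hB (1 / n) hε
  obtain ⟨C, hC⟩ := main s m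
  exact ⟨C, fun x hx => hC x (hs hx)⟩
end
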